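/- Let W, V_1, ..., V_n be a Nica-covariant isometric representation of the odometer semigroup O_n on H. Then the subspace L_0 = ⋂_{i=1}^n ker V_i* reduces W: if h ∈ L_0 then W h ∈ L_0 and W* h ∈ L_0. -/

import Mathlib

/-!
Taking adjoints of the relations `W V_k = V_{k+1}`, `W V_n = V_1 W` and of Nica covariance gives
`V_{k+1}* = V_k* W*`, `V_n* W* = W* V_1*` and `V_1* W = W V_n*`. Together with `W* W = 1` these
express each `V_i* W` and each `V_i* W*` as an operator that factors through some `V_j*` on the
right, so both kill `L_0`.
-/

open ContinuousLinearMap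

section

variable {H : Type*} [NormedAddCommGroup H] [InnerProductSpace ℂ H] [CompleteSpace H]

theorem mem_iInf_ker_adjoint_iff {ι : Type*} (V : ι → H →L[ℂ] H) (h : H) :
    h ∈ ⨅ i, LinearMap.ker (adjoint (V i) : H →ₗ[ℂ] H) ↔ ∀ i, adjoint (V i) h = 0 := by
  simp only [Submodule.mem_iInf, LinearMap.mem_ker, coe_coe]

theorem adjoint_comp_eq_adjoint_comp_of_comp_eq {A B C D : H →L[ℂ] H}
    (h : A ∘L B = C ∘L D) : adjoint B ∘L adjoint A = adjoint D ∘L adjoint C := by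
  rw [← adjoint_comp, h, adjoint_comp]

theorem adjoint_comp_adjoint_of_comp_eq {W A B : H →L[ℂ] H} (h : W ∘L A = B) :
    adjoint A ∘L adjoint W = adjoint B := by
  rw [← h, adjoint_comp]

theorem adjoint_comp_isometry_of_comp_eq {W A B : H →L[ℂ] H} (hW : adjoint W ∘L W = 1)
    (h : W ∘L A = B) : adjoint B ∘L W = adjoint A := by
  rw [← adjoint_comp_adjoint_of_comp_eq h, comp_assoc, hW]; rfl

variable {n : ℕ} (hn : 0 < n) {W : H →L[ℂ] H} {V : Fin n → H →L[ℂ] H}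

theorem apply_mem_iInf_ker_adjoint (hWiso : adjoint W ∘L W = 1)
    (hWV : ∀ i : Fin n, ∀ h : (i : ℕ) + 1 < n, W ∘L V i = V ⟨(i : ℕ) + 1, h⟩)
    (hNC : adjoint W ∘L V ⟨0, hn⟩ = V ⟨n - 1, Nat.sub_one_lt_of_lt hn⟩ ∘L adjoint W)
    {h : H} (hh : h ∈ ⨅ i, LinearMap.ker (adjoint (V i) : H →ₗ[ℂ] H)) :
    W h ∈ ⨅ i, LinearMap.ker (adjoint (V i) : H →ₗ[ℂ] H) := by
  rw [mem_iInf_ker_adjoint_iff] at hh ⊢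
  rintro ⟨_ | k, hk⟩
  · have hNC' := adjoint_comp_eq_adjoint_comp_of_comp_eq hNC
    rw [adjoint_adjoint] at hNC'
    rw [← comp_apply, hNC', comp_apply, hh, map_zero]
  · rw [← comp_apply, adjoint_comp_isometry_of_comp_eq hWiso (hWV ⟨k, by omega⟩ hk), hh]

theorem adjoint_apply_mem_iInf_ker_adjoint
    (hWV : ∀ i : Fin n, ∀ h : (i : ℕ) + 1 < n, W ∘L V i = V ⟨(i : ℕ) + 1, h⟩)
    (hWVn : W ∘L V ⟨n - 1, Nat.sub_one_lt_of_lt hn⟩ = V ⟨0, hn⟩ ∘L W)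
    {h : H} (hh : h ∈ ⨅ i, LinearMap.ker (adjoint (V i) : H →ₗ[ℂ] H)) :
    adjoint W h ∈ ⨅ i, LinearMap.ker (adjoint (V i) : H →ₗ[ℂ] H) := by
  rw [mem_iInf_ker_adjoint_iff] at hh ⊢
  rintro ⟨k, hk⟩
  by_cases hk' : k + 1 < n
  · rw [← comp_apply, adjoint_comp_adjoint_of_comp_eq (hWV ⟨k, hk⟩ hk'), hh]
  · obtain rfl : k = n - 1 := by omega
    rw [← comp_apply, adjoint_comp_eq_adjoint_comp_of_comp_eq hWVn, comp_apply, hh, map_zero]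

end

/-- For a Nica-covariant isometric representation `{W, V_1, …, V_n}` of `O_n`,
the subspace `L_0 = ⋂_{i} ker V_i*` reduces `W`. -/
theorem stmt_11 {H : Type*} [NormedAddCommGroup H] [InnerProductSpace ℂ H] [CompleteSpace H]
    (n : ℕ) (hn : 0 < n) (W : H →L[ℂ] H) (V : Fin n → H →L[ℂ] H)
    (hWiso : adjoint W ∘L W = 1)
    (hWV : ∀ i : Fin n, ∀ h : (i : ℕ) + 1 < n, W ∘L V i = V ⟨(i : ℕ) + 1, h⟩)
    (hWVn : W ∘L V ⟨n - 1, by omega⟩ = V ⟨0, hn⟩ ∘L W)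
    (hNC : adjoint W ∘L V ⟨0, hn⟩ = V ⟨n - 1, by omega⟩ ∘L adjoint W) :
    ∀ h ∈ ⨅ i : Fin n, LinearMap.ker (adjoint (V i) : H →ₗ[ℂ] H),
      W h ∈ (⨅ i : Fin n, LinearMap.ker (adjoint (V i) : H →ₗ[ℂ] H)) ∧
      adjoint W h ∈ (⨅ i : Fin n, LinearMap.ker (adjoint (V i) : H →ₗ[ℂ] H)) :=
  fun _ hh => ⟨apply_mem_iInf_ker_adjoint hn hWiso hWV hNC hh,
    adjoint_apply_mem_iInf_ker_adjoint hn hWV hWVn hh⟩
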